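/- arXiv:2401.14014 — 4 statements merged into one kernel-verified Lean document; each statement's English description precedes it below -/
import Mathlib

section
/- Let ε ∈ ℝ^M be a random vector and f: ℝ^D × ℝ^M → ℝ be measurable in ε. Suppose that for every x ∈ ℝ^D the distribution of f(x;ε) is symmetric around its median center m_f(x). Then the additivity of the median holds: for all x, y ∈ ℝ^D, the median center of f(x;ε) − f(y;ε'), where ε' is an i.i.d. copy of ε, equals m_f(x) − m_f(y). -/
open MeasureTheory ProbabilityTheory

/-- The center of the median of a real random variable `Y` under measure `μ`:
`(inf {t : F(t) > 1/2} + sup {t : F(t) < 1/2}) / 2` where `F` is the CDF of `Y`. -/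
noncomputable def medCenter {Ω : Type*} [MeasurableSpace Ω] (μ : Measure Ω) (Y : Ω → ℝ) : ℝ :=
  (sInf {t : ℝ | 1 / 2 < (μ {ω | Y ω ≤ t}).toReal} +
    sSup {t : ℝ | (μ {ω | Y ω ≤ t}).toReal < 1 / 2}) / 2

/-! A law symmetric about `c` has median center `c`: with `F` its CDF, the reflection
`t ↦ 2c - t` sends `{F > 1/2}` onto the points `s` with `F < 1/2` on `(-∞, s)`, so
`inf {F > 1/2} = 2c - sup {F < 1/2}`. If `X` and `Y` are independent and symmetric about `a`
and `b`, the pairs `(X - a, Y - b)` and `(a - X, b - Y)` have the same law, hence `X - Y` is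
symmetric about `a - b`; an i.i.d. copy inherits symmetry about the same center. -/

open Set Filter

namespace ProbabilityTheory

variable {Ω Ω' : Type*} [MeasurableSpace Ω] [MeasurableSpace Ω'] {μ : Measure Ω} {ν : Measure Ω'}
  {Y : Ω → ℝ} {c : ℝ}

def SymmetricAbout (μ : Measure Ω) (Y : Ω → ℝ) (c : ℝ) : Prop :=
  IdentDistrib (fun ω ↦ Y ω - c) (fun ω ↦ c - Y ω) μ μ

lemma IdentDistrib.medCenter_eq {Y' : Ω' → ℝ} (h : IdentDistrib Y Y' μ ν) :
    medCenter μ Y = medCenter ν Y' := by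
  have hcdf (t : ℝ) : μ {ω | Y ω ≤ t} = ν {ω | Y' ω ≤ t} := h.measure_mem_eq measurableSet_Iic
  simp only [medCenter, hcdf]

lemma SymmetricAbout.of_identDistrib {Y' : Ω' → ℝ}
    (hY : SymmetricAbout μ Y c) (h : IdentDistrib Y Y' μ ν) : SymmetricAbout ν Y' c :=
  ((h.symm.comp (measurable_id.sub_const c)).trans hY).trans
    (h.comp (measurable_const.sub measurable_id))

lemma SymmetricAbout.aemeasurable (hY : SymmetricAbout μ Y c) : AEMeasurable Y μ := by
  simpa using hY.aemeasurable_fst.add_const c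

lemma identDistrib_id_map (hY : AEMeasurable Y μ) : IdentDistrib Y id μ (μ.map Y) :=
  ⟨hY, aemeasurable_id, Measure.map_id.symm⟩

section Real

variable {ρ : Measure ℝ} [IsProbabilityMeasure ρ]

lemma SymmetricAbout.cdf_add_measureReal_Iio (h : SymmetricAbout ρ id c) (t : ℝ) :
    cdf ρ t + ρ.real (Iio (2 * c - t)) = 1 := by
  have hrefl : ρ.real (Iic t) = ρ.real (Iio (2 * c - t))ᶜ := by
    have hmem := h.measure_mem_eq (measurableSet_Iic (a := t - c))
    simp only [measureReal_def]
    convert congrArg ENNReal.toReal hmem using 3 <;>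
      · ext x; simp only [mem_Iic, mem_compl_iff, mem_Iio, mem_preimage, id, not_lt]
        constructor <;> intro <;> linarith
  rw [cdf_eq_real, hrefl, probReal_compl_eq_one_sub measurableSet_Iio]
  ring

lemma SymmetricAbout.medCenter_id_eq (h : SymmetricAbout ρ id c) : medCenter ρ id = c := by
  set A := {t | 1 / 2 < cdf ρ t}
  set B := {t | cdf ρ t < 1 / 2}
  have hA_reflect (t : ℝ) (ht : t ∈ A) (s : ℝ) (hs : s < 2 * c - t) : s ∈ B := by
    have hsum := h.cdf_add_measureReal_Iio t
    have hle : cdf ρ s ≤ ρ.real (Iio (2 * c - t)) := by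
      rw [cdf_eq_real]; exact measureReal_mono (Iic_subset_Iio.2 hs)
    simp only [A, B, mem_ofPred_eq] at ht ⊢
    linarith
  have hB_reflect (s : ℝ) (hs : s ∈ B) : 2 * c - s ∈ A := by
    have hsum := h.cdf_add_measureReal_Iio (2 * c - s)
    rw [sub_sub_cancel] at hsum
    have hle : ρ.real (Iio s) ≤ cdf ρ s := by
      rw [cdf_eq_real]; exact measureReal_mono Iio_subset_Iic_self
    simp only [A, B, mem_ofPred_eq] at hs ⊢
    linarith
  have hBA (s : ℝ) (hs : s ∈ B) (t : ℝ) (ht : t ∈ A) : s ≤ t :=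
    ((monotone_cdf ρ).reflect_lt (hs.trans ht)).le
  obtain ⟨t₀, ht₀⟩ := ((tendsto_cdf_atTop ρ).eventually (eventually_gt_nhds one_half_lt_one)).exists
  obtain ⟨s₀, hs₀⟩ := ((tendsto_cdf_atBot ρ).eventually (eventually_lt_nhds one_half_pos)).exists
  have hinf : 2 * c - sSup B ≤ sInf A :=
    le_csInf ⟨t₀, ht₀⟩ fun t ht ↦ sub_le_comm.1 <| le_of_forall_lt_imp_le_of_dense fun s hs ↦
      le_csSup ⟨t₀, fun s hs ↦ hBA s hs t₀ ht₀⟩ (hA_reflect t ht s hs)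
  have hsup : sSup B ≤ 2 * c - sInf A :=
    csSup_le ⟨s₀, hs₀⟩ fun s hs ↦ le_sub_comm.1 <|
      csInf_le ⟨s₀, fun t ht ↦ hBA s₀ hs₀ t ht⟩ (hB_reflect s hs)
  have hmed : medCenter ρ id = (sInf A + sSup B) / 2 := by
    simp only [medCenter, A, B, cdf_eq_real, measureReal_def]; rfl
  rw [hmed]
  linarith

end Real

lemma SymmetricAbout.medCenter_eq [IsProbabilityMeasure μ] (h : SymmetricAbout μ Y c) :
    medCenter μ Y = c := by
  have hY := identDistrib_id_map h.aemeasurable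
  have := Measure.isProbabilityMeasure_map h.aemeasurable
  rw [hY.medCenter_eq]
  exact (h.of_identDistrib hY).medCenter_id_eq

lemma SymmetricAbout.sub [IsFiniteMeasure μ] {X : Ω → ℝ} {a : ℝ} (hX : SymmetricAbout μ X a)
    (hY : SymmetricAbout μ Y c) (hXY : IndepFun X Y μ) :
    SymmetricAbout μ (fun ω ↦ X ω - Y ω) (a - c) := by
  unfold SymmetricAbout
  have hpair := IdentDistrib.prodMk hX hY
    (hXY.comp (measurable_id.sub_const a) (measurable_id.sub_const c))
    (hXY.comp (measurable_const.sub measurable_id) (measurable_const.sub measurable_id))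
  convert hpair.comp (measurable_fst.sub measurable_snd) using 1 <;>
    · funext ω; simp only [Function.comp_apply, Pi.sub_apply]; ring

end ProbabilityTheory

/-- If the distribution of `f(x; ε)` is symmetric around its median center for all `x`,
then the median is additive: the median center of `f(x; ε) - f(y; ε')` (for `ε'` an
i.i.d. copy of `ε`) is `m_f(x) - m_f(y)` (Proposition 2 of the paper). -/
theorem statement8 {Ω : Type*} [MeasurableSpace Ω] (μ : Measure Ω) [IsProbabilityMeasure μ]
    (D M : ℕ) (f : (Fin D → ℝ) → (Fin M → ℝ) → ℝ) (hf : ∀ x, Measurable (f x))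
    (ε ε' : Ω → Fin M → ℝ) (hε : Measurable ε) (hε' : Measurable ε')
    (hid : μ.map ε = μ.map ε') (hindep : IndepFun ε ε' μ)
    (hsym : ∀ x : Fin D → ℝ,
      μ.map (fun ω => f x (ε ω) - medCenter μ (fun ω' => f x (ε ω'))) =
        μ.map (fun ω => medCenter μ (fun ω' => f x (ε ω')) - f x (ε ω))) :
    ∀ x y : Fin D → ℝ,
      medCenter μ (fun ω => f x (ε ω) - f y (ε' ω)) =
        medCenter μ (fun ω => f x (ε ω)) - medCenter μ (fun ω => f y (ε ω)) := by
  have hsymm (x : Fin D → ℝ) :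
      SymmetricAbout μ (fun ω ↦ f x (ε ω)) (medCenter μ (fun ω ↦ f x (ε ω))) :=
    have hX := ((hf x).comp hε).aemeasurable
    ⟨hX.sub_const _, aemeasurable_const.sub hX, hsym x⟩
  have hεε' : IdentDistrib ε ε' μ μ := ⟨hε.aemeasurable, hε'.aemeasurable, hid⟩
  intro x y
  have hy' := (hsymm y).of_identDistrib (hεε'.comp (hf y))
  exact ((hsymm x).sub hy' (hindep.comp (hf x) (hf y))).medCenter_eq
end

section
/- Let ε ∈ ℝ^M be a random vector and f: ℝ^D × ℝ^M → ℝ be measurable in ε. Suppose that the distribution of f(x;ε) − m_f(x) is identical for all x ∈ ℝ^D. Then the additivity of the median holds: for all x, y ∈ ℝ^D, the median center of f(x;ε) − f(y;ε'), where ε' is an i.i.d. copy of ε, equals m_f(x) − m_f(y). -/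
open MeasureTheory ProbabilityTheory Set
open scoped ENNReal

namespace MedAux

/-- The center of the median as a function of a measure on `ℝ`. -/
noncomputable def cCenter (ν : Measure ℝ) : ℝ :=
  (sInf {t : ℝ | 1 / 2 < (ν (Iic t)).toReal} +
    sSup {t : ℝ | (ν (Iic t)).toReal < 1 / 2}) / 2

lemma medCenter_eq_cCenter {Ω : Type*} [MeasurableSpace Ω] (μ : Measure Ω) {Y : Ω → ℝ}
    (hY : Measurable Y) : medCenter μ Y = cCenter (μ.map Y) := by
  have h : ∀ t : ℝ, (μ.map Y) (Iic t) = μ {ω | Y ω ≤ t} := fun t => by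
    rw [Measure.map_apply hY measurableSet_Iic]; rfl
  simp only [medCenter, cCenter, h]

variable {ν : Measure ℝ} [IsProbabilityMeasure ν]

lemma F_mono {s t : ℝ} (h : s ≤ t) : (ν (Iic s)).toReal ≤ (ν (Iic t)).toReal :=
  ENNReal.toReal_mono (measure_ne_top ν _) (measure_mono (Iic_subset_Iic.2 h))

lemma exists_F_gt : ∃ t : ℝ, 1 / 2 < (ν (Iic t)).toReal := by
  have h := tendsto_measure_Iic_atTop ν
  rw [measure_univ] at h
  have h2 : ∀ᶠ t : ℝ in Filter.atTop, ν (Iic t) ∈ Ioi (1 / 2 : ℝ≥0∞) :=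
    h.eventually (Ioi_mem_nhds (by norm_num))
  obtain ⟨t, ht⟩ := h2.exists
  refine ⟨t, ?_⟩
  have := ENNReal.toReal_lt_toReal (by norm_num) (measure_ne_top ν (Iic t)) |>.2 ht
  simpa using this

lemma exists_F_lt : ∃ t : ℝ, (ν (Iic t)).toReal < 1 / 2 := by
  have h := tendsto_measure_Ici_atBot ν
  rw [measure_univ] at h
  have h2 : ∀ᶠ t : ℝ in Filter.atBot, ν (Ici t) ∈ Ioi (1 / 2 : ℝ≥0∞) :=
    h.eventually (Ioi_mem_nhds (by norm_num))
  obtain ⟨t, ht⟩ := h2.exists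
  refine ⟨t - 1, ?_⟩
  have hdisj : Disjoint (Iic (t - 1)) (Ici t) := by
    rw [Set.disjoint_left]; intro a ha hb
    simp only [mem_Iic] at ha; simp only [mem_Ici] at hb; linarith
  have hsum : ν (Iic (t - 1)) + ν (Ici t) ≤ 1 := by
    rw [← measure_union hdisj measurableSet_Ici]
    exact (measure_mono (subset_univ _)).trans_eq measure_univ
  have hIci : (1 / 2 : ℝ) < (ν (Ici t)).toReal := by
    have := ENNReal.toReal_lt_toReal (by norm_num) (measure_ne_top ν (Ici t)) |>.2 ht
    simpa using this
  have hsum' : (ν (Iic (t - 1))).toReal + (ν (Ici t)).toReal ≤ 1 := by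
    rw [← ENNReal.toReal_add (measure_ne_top ν _) (measure_ne_top ν _)]
    calc (ν (Iic (t - 1)) + ν (Ici t)).toReal ≤ (1 : ℝ≥0∞).toReal :=
        ENNReal.toReal_mono (by simp) hsum
      _ = 1 := by simp
  linarith

lemma A_nonempty : {t : ℝ | 1 / 2 < (ν (Iic t)).toReal}.Nonempty := exists_F_gt

lemma B_nonempty : {t : ℝ | (ν (Iic t)).toReal < 1 / 2}.Nonempty := exists_F_lt

lemma A_bddBelow : BddBelow {t : ℝ | 1 / 2 < (ν (Iic t)).toReal} := by
  obtain ⟨b, hb⟩ := exists_F_lt (ν := ν)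
  exact ⟨b, fun a ha => by
    by_contra h
    push_neg at h
    exact absurd (lt_of_lt_of_le ha (F_mono h.le)) (not_lt.2 hb.le)⟩

lemma B_bddAbove : BddAbove {t : ℝ | (ν (Iic t)).toReal < 1 / 2} := by
  obtain ⟨a, ha⟩ := exists_F_gt (ν := ν)
  exact ⟨a, fun b hb => by
    by_contra h
    push_neg at h
    exact absurd (lt_of_lt_of_le ha (F_mono h.le)) (not_lt.2 hb.le)⟩

lemma sInf_shift (S : Set ℝ) (hS : S.Nonempty) (hb : BddBelow S) (c : ℝ) :
    sInf {t : ℝ | t - c ∈ S} = sInf S + c := by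
  have hglb : IsGLB S (sInf S) := isGLB_csInf hS hb
  have : IsGLB {t : ℝ | t - c ∈ S} (sInf S + c) := by
    constructor
    · intro t ht
      have := hglb.1 ht
      linarith
    · intro w hw
      have : w - c ≤ sInf S := hglb.2 fun s hs => by
        have := hw (show (s + c) - c ∈ S by simpa using hs)
        linarith
      linarith
  exact this.csInf_eq ⟨hS.choose + c, by simpa using hS.choose_spec⟩

lemma sSup_shift (S : Set ℝ) (hS : S.Nonempty) (hb : BddAbove S) (c : ℝ) :
    sSup {t : ℝ | t - c ∈ S} = sSup S + c := by
  have hlub : IsLUB S (sSup S) := isLUB_csSup hS hb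
  have : IsLUB {t : ℝ | t - c ∈ S} (sSup S + c) := by
    constructor
    · intro t ht
      have := hlub.1 ht
      linarith
    · intro w hw
      have : sSup S ≤ w - c := hlub.2 fun s hs => by
        have := hw (show (s + c) - c ∈ S by simpa using hs)
        linarith
      linarith
  exact this.csSup_eq ⟨hS.choose + c, by simpa using hS.choose_spec⟩

lemma cCenter_map_add (c : ℝ) : cCenter (ν.map (· + c)) = cCenter ν + c := by
  have hmap : ∀ t : ℝ, (ν.map (· + c)) (Iic t) = ν (Iic (t - c)) := fun t => by
    rw [Measure.map_apply (measurable_add_const c) measurableSet_Iic]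
    congr 1
    ext s
    simp only [mem_preimage, mem_Iic]
    constructor <;> intro h <;> linarith
  simp only [cCenter, hmap]
  rw [show {t : ℝ | 1 / 2 < (ν (Iic (t - c))).toReal}
      = {t : ℝ | t - c ∈ {u : ℝ | 1 / 2 < (ν (Iic u)).toReal}} from rfl,
    show {t : ℝ | (ν (Iic (t - c))).toReal < 1 / 2}
      = {t : ℝ | t - c ∈ {u : ℝ | (ν (Iic u)).toReal < 1 / 2}} from rfl,
    sInf_shift _ A_nonempty A_bddBelow, sSup_shift _ B_nonempty B_bddAbove]
  ring

lemma cCenter_eq_zero_of_symm (hsym : ν.map (fun x => -x) = ν) : cCenter ν = 0 := by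
  have hIci : ∀ t : ℝ, ν (Iic t) = ν (Ici (-t)) := fun t => by
    conv_lhs => rw [← hsym]
    rw [Measure.map_apply measurable_neg measurableSet_Iic]
    congr 1
    ext s
    simp only [mem_preimage, mem_Iic, mem_Ici]
    constructor <;> intro h <;> linarith
  -- (i) : 1 ≤ F t + F (-t)
  have hi : ∀ t : ℝ, (1 : ℝ) ≤ (ν (Iic t)).toReal + (ν (Iic (-t))).toReal := by
    intro t
    have hcover : (univ : Set ℝ) ⊆ Ici (-t) ∪ Iic (-t) := fun s _ => by
      rcases le_total (-t) s with h | h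
      · exact Or.inl h
      · exact Or.inr h
    have h1 : (1 : ℝ≥0∞) ≤ ν (Ici (-t)) + ν (Iic (-t)) := by
      calc (1 : ℝ≥0∞) = ν univ := (measure_univ).symm
        _ ≤ ν (Ici (-t) ∪ Iic (-t)) := measure_mono hcover
        _ ≤ ν (Ici (-t)) + ν (Iic (-t)) := measure_union_le _ _
    have := ENNReal.toReal_mono
      (by exact ENNReal.add_ne_top.2 ⟨measure_ne_top ν _, measure_ne_top ν _⟩) h1
    rw [ENNReal.toReal_add (measure_ne_top ν _) (measure_ne_top ν _)] at this
    simpa [hIci t] using this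
  -- (ii) : u < -t → F u + F t ≤ 1
  have hii : ∀ u t : ℝ, u < -t →
      (ν (Iic u)).toReal + (ν (Iic t)).toReal ≤ 1 := by
    intro u t hut
    have hdisj : Disjoint (Iic u) (Ici (-t)) := by
      rw [Set.disjoint_left]; intro a ha hb
      simp only [mem_Iic] at ha; simp only [mem_Ici] at hb; linarith
    have h1 : ν (Iic u) + ν (Ici (-t)) ≤ 1 := by
      rw [← measure_union hdisj measurableSet_Ici]
      exact (measure_mono (subset_univ _)).trans_eq measure_univ
    have := ENNReal.toReal_mono (by simp) h1
    rw [ENNReal.toReal_add (measure_ne_top ν _) (measure_ne_top ν _)] at this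
    simp only [ENNReal.toReal_one] at this
    rw [hIci t]
    linarith
  set A := {t : ℝ | 1 / 2 < (ν (Iic t)).toReal} with hA
  set B := {t : ℝ | (ν (Iic t)).toReal < 1 / 2} with hB
  have hba : sSup B ≤ -sInf A := by
    apply csSup_le B_nonempty
    intro t ht
    have hmem : -t ∈ A := by
      have := hi t
      simp only [hB, mem_setOf_eq] at ht
      simp only [hA, mem_setOf_eq]
      linarith
    have := csInf_le A_bddBelow hmem
    linarith
  have hab : -sInf A ≤ sSup B := by
    have : -sSup B ≤ sInf A := by
      apply le_csInf A_nonempty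
      intro t ht
      have hle : -t ≤ sSup B := by
        by_contra h
        push_neg at h
        obtain ⟨u, hu1, hu2⟩ := exists_between h
        have hmem : u ∈ B := by
          simp only [hA, mem_setOf_eq] at ht
          simp only [hB, mem_setOf_eq]
          have := hii u t hu2
          linarith
        exact absurd (le_csSup B_bddAbove hmem) (not_le.2 hu1)
      linarith
    linarith
  have : sSup B = -sInf A := le_antisymm hba hab
  simp only [cCenter, ← hA, ← hB, this]
  ring

end MedAux

open MedAux

/-- If the distribution of `f(x; ε) - m_f(x)` is identical for all `x`, then the median is
additive: the median center of `f(x; ε) - f(y; ε')` (for `ε'` an i.i.d. copy of `ε`) is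
`m_f(x) - m_f(y)` (Proposition 3 of the paper). -/
theorem statement9 {Ω : Type*} [MeasurableSpace Ω] (μ : Measure Ω) [IsProbabilityMeasure μ]
    (D M : ℕ) (f : (Fin D → ℝ) → (Fin M → ℝ) → ℝ) (hf : ∀ x, Measurable (f x))
    (ε ε' : Ω → Fin M → ℝ) (hε : Measurable ε) (hε' : Measurable ε')
    (hid : μ.map ε = μ.map ε') (hindep : IndepFun ε ε' μ)
    (hident : ∀ x y : Fin D → ℝ,
      μ.map (fun ω => f x (ε ω) - medCenter μ (fun ω' => f x (ε ω'))) =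
        μ.map (fun ω => f y (ε ω) - medCenter μ (fun ω' => f y (ε ω')))) :
    ∀ x y : Fin D → ℝ,
      medCenter μ (fun ω => f x (ε ω) - f y (ε' ω)) =
        medCenter μ (fun ω => f x (ε ω)) - medCenter μ (fun ω => f y (ε ω)) := by
  intro x y
  set mx := medCenter μ (fun ω => f x (ε ω)) with hmx
  set my := medCenter μ (fun ω => f y (ε ω)) with hmy
  set U : Ω → ℝ := fun ω => f x (ε ω) - mx with hU
  set U' : Ω → ℝ := fun ω => f y (ε' ω) - my with hU'
  have hg1 : Measurable (fun e : Fin M → ℝ => f x e - mx) := (hf x).sub measurable_const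
  have hg2 : Measurable (fun e : Fin M → ℝ => f y e - my) := (hf y).sub measurable_const
  have hUm : Measurable U := hg1.comp hε
  have hU'm : Measurable U' := hg2.comp hε'
  -- the common law ν of U and U'
  set ν := μ.map U with hν
  have hlawU' : μ.map U' = ν := by
    have h1 : μ.map U' = (μ.map ε').map (fun e => f y e - my) := by
      rw [Measure.map_map hg2 hε']; rfl
    have h2 : (μ.map ε).map (fun e => f y e - my) = μ.map (fun ω => f y (ε ω) - my) := by
      rw [Measure.map_map hg2 hε]; rfl
    rw [h1, ← hid, h2, ← hident x y]
  -- independence and joint law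
  have hindepUU' : IndepFun U U' μ := hindep.comp hg1 hg2
  have hpair : μ.map (fun ω => (U ω, U' ω)) = ν.prod ν := by
    rw [(indepFun_iff_map_prod_eq_prod_map_map hUm.aemeasurable hU'm.aemeasurable).mp hindepUU',
      hlawU']
  -- W = U - U' is symmetric
  set W : Ω → ℝ := fun ω => U ω - U' ω with hW
  have hWm : Measurable W := hUm.sub hU'm
  have hπ : Measurable (fun p : ℝ × ℝ => p.1 - p.2) := measurable_fst.sub measurable_snd
  have hpm : Measurable (fun ω => (U ω, U' ω)) := hUm.prodMk hU'm
  have hmapW : μ.map W = (ν.prod ν).map (fun p : ℝ × ℝ => p.1 - p.2) := by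
    rw [← hpair, Measure.map_map hπ hpm]; rfl
  have hsym : (μ.map W).map (fun x : ℝ => -x) = μ.map W := by
    rw [hmapW, Measure.map_map measurable_neg hπ]
    have h1 : ((fun x : ℝ => -x) ∘ fun p : ℝ × ℝ => p.1 - p.2)
        = (fun p : ℝ × ℝ => p.1 - p.2) ∘ Prod.swap := by
      funext p; simp [Prod.swap]
    rw [h1, ← Measure.map_map hπ measurable_swap, Measure.prod_swap]
  have hνprob : IsProbabilityMeasure ν := Measure.isProbabilityMeasure_map hUm.aemeasurable
  have hWprob : IsProbabilityMeasure (μ.map W) := Measure.isProbabilityMeasure_map hWm.aemeasurable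
  have hWzero : cCenter (μ.map W) = 0 := cCenter_eq_zero_of_symm hsym
  -- translate
  have hkey : (fun ω => f x (ε ω) - f y (ε' ω)) = fun ω => W ω + (mx - my) := by
    funext ω; simp only [hW, hU, hU']; ring
  rw [hkey, medCenter_eq_cCenter μ (hWm.add_const _)]
  have hmm : μ.map (fun ω => W ω + (mx - my)) = (μ.map W).map (· + (mx - my)) := by
    rw [Measure.map_map (measurable_add_const _) hWm]; rfl
  rw [hmm, cCenter_map_add, hWzero]
  ring
end

section
/- Let ε ∈ ℝ^M be a random vector and f: ℝ^D × ℝ^M → ℝ satisfy the additivity of the median (Assumption 3). Let ε₁, ε₂ be i.i.d. copies of ε and define ε^f(x₁,x₂) := f(x₁;ε₁) − f(x₂;ε₂). Then for any x₁, x₂ ∈ ℝ^D, E[sign(ε^f(x₁,x₂))] · sign(m_f(x₁) − m_f(x₂)) ≥ 0. -/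
open MeasureTheory ProbabilityTheory

/-!
Additivity of the median turns `m_f(x₁) - m_f(x₂)` into the median center of the single
variable `Z = ε^f(x₁,x₂)`, so it suffices that `E[sign Z] = P(Z > 0) - P(Z < 0)` has the sign
of `m(Z)` for every real random variable `Z`. If `m(Z) > 0`, then `P(Z ≤ 0) ≤ 1/2`, for otherwise
`0` would lie in `{t | F t > 1/2}` and bound `{t | F t < 1/2}` from above, forcing `m(Z) ≤ 0`;
hence `P(Z < 0) ≤ 1/2 ≤ P(Z > 0)`. The case `m(Z) < 0` is symmetric.
-/

namespace MeasureTheory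

variable {Ω : Type*} [MeasurableSpace Ω] {μ : Measure Ω} {Z : Ω → ℝ}

theorem integral_sign_eq [IsFiniteMeasure μ] (hZ : Measurable Z) :
    ∫ ω, Real.sign (Z ω) ∂μ = μ.real {ω | 0 < Z ω} - μ.real {ω | Z ω < 0} := by
  have hpos : MeasurableSet {ω | 0 < Z ω} := measurableSet_lt measurable_const hZ
  have hneg : MeasurableSet {ω | Z ω < 0} := measurableSet_lt hZ measurable_const
  have hsign : (fun ω => Real.sign (Z ω)) =
      {ω | 0 < Z ω}.indicator 1 - {ω | Z ω < 0}.indicator 1 := by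
    ext ω
    rcases lt_trichotomy (Z ω) 0 with h | h | h
    · simp [Real.sign_of_neg h, h, h.not_gt]
    · simp [h]
    · simp [Real.sign_of_pos h, h, h.not_gt]
  rw [hsign, integral_sub' ((integrable_const 1).indicator hpos)
      ((integrable_const 1).indicator hneg),
    integral_indicator_one hpos, integral_indicator_one hneg]

theorem measureReal_le_zero_le_half_of_medCenter_pos [IsFiniteMeasure μ]
    (h : 0 < medCenter μ Z) : μ.real {ω | Z ω ≤ 0} ≤ 1 / 2 := by
  by_contra! hF
  have hinf : sInf {t : ℝ | 1 / 2 < μ.real {ω | Z ω ≤ t}} ≤ 0 := by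
    by_cases hb : BddBelow {t : ℝ | 1 / 2 < μ.real {ω | Z ω ≤ t}}
    · exact csInf_le hb hF
    · rw [Real.sInf_of_not_bddBelow hb]
  have hsup : sSup {t : ℝ | μ.real {ω | Z ω ≤ t} < 1 / 2} ≤ 0 := by
    refine Real.sSup_nonpos fun t ht => ?_
    by_contra! ht0
    have : μ.real {ω | Z ω ≤ 0} ≤ μ.real {ω | Z ω ≤ t} :=
      measureReal_mono fun ω (hω : Z ω ≤ 0) => hω.trans ht0.le
    exact (ht.trans hF).not_ge this
  have : medCenter μ Z ≤ 0 := by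
    unfold medCenter
    exact div_nonpos_of_nonpos_of_nonneg (add_nonpos hinf hsup) zero_le_two
  linarith

theorem half_le_measureReal_lt_zero_of_medCenter_neg [IsFiniteMeasure μ]
    (h : medCenter μ Z < 0) : 1 / 2 ≤ μ.real {ω | Z ω < 0} := by
  by_contra! hq
  have hIio : Set.Iio 0 ⊆ {t : ℝ | μ.real {ω | Z ω ≤ t} < 1 / 2} := fun t (ht : t < 0) =>
    (measureReal_mono fun ω (hω : Z ω ≤ t) => hω.trans_lt ht).trans_lt hq
  have hinf : 0 ≤ sInf {t : ℝ | 1 / 2 < μ.real {ω | Z ω ≤ t}} := by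
    refine Real.sInf_nonneg fun t ht => ?_
    by_contra! ht0
    exact lt_asymm ht.out (hIio ht0).out
  have hsup : 0 ≤ sSup {t : ℝ | μ.real {ω | Z ω ≤ t} < 1 / 2} := by
    by_cases hb : BddAbove {t : ℝ | μ.real {ω | Z ω ≤ t} < 1 / 2}
    · calc (0 : ℝ) = sSup (Set.Iio 0) := csSup_Iio.symm
        _ ≤ _ := csSup_le_csSup hb Set.nonempty_Iio hIio
    · rw [Real.sSup_of_not_bddAbove hb]
  have : 0 ≤ medCenter μ Z := by
    unfold medCenter
    exact div_nonneg (add_nonneg hinf hsup) zero_le_two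
  linarith

theorem integral_sign_mul_sign_medCenter_nonneg [IsProbabilityMeasure μ] (hZ : Measurable Z) :
    0 ≤ (∫ ω, Real.sign (Z ω) ∂μ) * Real.sign (medCenter μ Z) := by
  rw [integral_sign_eq hZ]
  rcases lt_trichotomy (medCenter μ Z) 0 with h | h | h
  · have hneg := half_le_measureReal_lt_zero_of_medCenter_neg h
    have hpos : μ.real {ω | 0 < Z ω} ≤ 1 - μ.real {ω | Z ω < 0} := by
      rw [← probReal_compl_eq_one_sub (measurableSet_lt hZ measurable_const)]
      exact measureReal_mono fun ω (hω : 0 < Z ω) => hω.not_gt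
    rw [Real.sign_of_neg h]
    linarith
  · simp [h]
  · have hle := measureReal_le_zero_le_half_of_medCenter_pos h
    have hpos : μ.real {ω | 0 < Z ω} = 1 - μ.real {ω | Z ω ≤ 0} := by
      rw [← probReal_compl_eq_one_sub (measurableSet_le hZ measurable_const)]
      simp only [Set.compl_ofPred, not_le]
    have hneg : μ.real {ω | Z ω < 0} ≤ μ.real {ω | Z ω ≤ 0} :=
      measureReal_mono fun ω (hω : Z ω < 0) => hω.le
    rw [Real.sign_of_pos h]
    linarith

end MeasureTheory

theorem statement11_general {Ω : Type*} [MeasurableSpace Ω] (μ : Measure Ω) [IsProbabilityMeasure μ]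
    (D M : ℕ) (f : (Fin D → ℝ) → (Fin M → ℝ) → ℝ) (hf : ∀ x, Measurable (f x))
    (ε₁ ε₂ : Ω → Fin M → ℝ) (hε₁ : Measurable ε₁) (hε₂ : Measurable ε₂)
    (hmed_add : ∀ x y : Fin D → ℝ,
      medCenter μ (fun ω => f x (ε₁ ω) - f y (ε₂ ω)) =
        medCenter μ (fun ω => f x (ε₁ ω)) - medCenter μ (fun ω => f y (ε₁ ω))) :
    ∀ x₁ x₂ : Fin D → ℝ,
      0 ≤ (∫ ω, Real.sign (f x₁ (ε₁ ω) - f x₂ (ε₂ ω)) ∂μ) *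
        Real.sign (medCenter μ (fun ω => f x₁ (ε₁ ω)) -
          medCenter μ (fun ω => f x₂ (ε₁ ω))) := by
  intro x₁ x₂
  rw [← hmed_add]
  exact integral_sign_mul_sign_medCenter_nonneg (((hf x₁).comp hε₁).sub ((hf x₂).comp hε₂))

/-- Under additivity of the median (Assumption 3), the expectation of the sign of
`ε^f(x₁,x₂) = f(x₁;ε₁) - f(x₂;ε₂)` has the same sign as `m_f(x₁) - m_f(x₂)` in the weak
sense (first part of Proposition 5 of the paper). -/
theorem statement11 {Ω : Type*} [MeasurableSpace Ω] (μ : Measure Ω) [IsProbabilityMeasure μ]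
    (D M : ℕ) (f : (Fin D → ℝ) → (Fin M → ℝ) → ℝ) (hf : ∀ x, Measurable (f x))
    (ε₁ ε₂ : Ω → Fin M → ℝ) (hε₁ : Measurable ε₁) (hε₂ : Measurable ε₂)
    (hid : μ.map ε₁ = μ.map ε₂) (hindep : IndepFun ε₁ ε₂ μ)
    (hmed_add : ∀ x y : Fin D → ℝ,
      medCenter μ (fun ω => f x (ε₁ ω) - f y (ε₂ ω)) =
        medCenter μ (fun ω => f x (ε₁ ω)) - medCenter μ (fun ω => f y (ε₁ ω))) :
    ∀ x₁ x₂ : Fin D → ℝ,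
      0 ≤ (∫ ω, Real.sign (f x₁ (ε₁ ω) - f x₂ (ε₂ ω)) ∂μ) *
        Real.sign (medCenter μ (fun ω => f x₁ (ε₁ ω)) -
          medCenter μ (fun ω => f x₂ (ε₁ ω))) :=
  statement11_general μ D M f hf ε₁ ε₂ hε₁ hε₂ hmed_add
end

section
/- Let X₁ and X₂ be independent real random variables with cumulative distribution functions φ₁ and φ₂, and suppose there exists δ > 0 such that φ₁ and φ₂ are continuous and strictly increasing on [−δ, δ] with φ₁(0) = φ₂(0) = 1/2. Suppose furthermore that Z = X₁ − X₂ is symmetric around 0. Then the cumulative distribution function φ_Z of Z satisfies φ_Z(z) < 1/2 for every z < 0 and φ_Z(z) > 1/2 for every z > 0. -/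
open MeasureTheory ProbabilityTheory

/-- If `X₁, X₂` are independent with CDFs continuous and strictly increasing on `[-δ, δ]`
taking value `1/2` at `0`, and `Z = X₁ - X₂` is symmetric around `0`, then the CDF of `Z`
is strictly below `1/2` on the negatives and strictly above `1/2` on the positives. -/
theorem statement13 {Ω : Type*} [MeasurableSpace Ω] (μ : Measure Ω) [IsProbabilityMeasure μ]
    (X₁ X₂ : Ω → ℝ) (hX₁ : Measurable X₁) (hX₂ : Measurable X₂)
    (hindep : IndepFun X₁ X₂ μ)
    (δ : ℝ) (hδ : 0 < δ)
    (hc₁ : ContinuousOn (fun t => (μ {ω | X₁ ω ≤ t}).toReal) (Set.Icc (-δ) δ))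
    (hc₂ : ContinuousOn (fun t => (μ {ω | X₂ ω ≤ t}).toReal) (Set.Icc (-δ) δ))
    (hs₁ : StrictMonoOn (fun t => (μ {ω | X₁ ω ≤ t}).toReal) (Set.Icc (-δ) δ))
    (hs₂ : StrictMonoOn (fun t => (μ {ω | X₂ ω ≤ t}).toReal) (Set.Icc (-δ) δ))
    (h0₁ : (μ {ω | X₁ ω ≤ 0}).toReal = 1 / 2)
    (h0₂ : (μ {ω | X₂ ω ≤ 0}).toReal = 1 / 2)
    (hsym : μ.map (fun ω => X₁ ω - X₂ ω) = μ.map (fun ω => X₂ ω - X₁ ω)) :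
    (∀ z < (0 : ℝ), (μ {ω | X₁ ω - X₂ ω ≤ z}).toReal < 1 / 2) ∧
    (∀ z > (0 : ℝ), 1 / 2 < (μ {ω | X₁ ω - X₂ ω ≤ z}).toReal) := by
  have hZm : Measurable (fun ω => X₁ ω - X₂ ω) := hX₁.sub hX₂
  have hZm' : Measurable (fun ω => X₂ ω - X₁ ω) := hX₂.sub hX₁
  have hmap : ∀ s : Set ℝ, MeasurableSet s →
      μ ((fun ω => X₁ ω - X₂ ω) ⁻¹' s) = μ ((fun ω => X₂ ω - X₁ ω) ⁻¹' s) := by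
    intro s hs
    rw [← Measure.map_apply hZm hs, ← Measure.map_apply hZm' hs, hsym]
  -- P(Z < 0) ≤ 1/2
  have hswap : μ {ω | X₂ ω - X₁ ω ≤ 0} = μ {ω | X₁ ω - X₂ ω ≤ 0} := by
    have := hmap (Set.Iic 0) measurableSet_Iic
    simpa [Set.preimage, Set.mem_Iic] using this.symm
  have hlt0_le : (μ {ω | X₁ ω - X₂ ω < 0}).toReal ≤ 1 / 2 := by
    have hcompl : μ {ω | X₁ ω - X₂ ω < 0} + μ {ω | X₂ ω - X₁ ω ≤ 0} = 1 := by
      have he : {ω | X₂ ω - X₁ ω ≤ 0} = {ω | X₁ ω - X₂ ω < 0}ᶜ := by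
        ext ω
        simp only [Set.mem_setOf_eq, Set.mem_compl_iff, not_lt]
        constructor <;> intro h <;> linarith
      rw [he, measure_add_measure_compl (measurableSet_lt hZm measurable_const), measure_univ]
    rw [hswap] at hcompl
    have hle : μ {ω | X₁ ω - X₂ ω < 0} ≤ μ {ω | X₁ ω - X₂ ω ≤ 0} :=
      measure_mono (Set.setOf_subset_setOf.mpr (fun ω => le_of_lt))
    have hsum : μ {ω | X₁ ω - X₂ ω < 0} + μ {ω | X₁ ω - X₂ ω < 0} ≤ 1 := by
      calc μ {ω | X₁ ω - X₂ ω < 0} + μ {ω | X₁ ω - X₂ ω < 0}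
          ≤ μ {ω | X₁ ω - X₂ ω < 0} + μ {ω | X₁ ω - X₂ ω ≤ 0} := by gcongr
        _ = 1 := hcompl
    have h := ENNReal.toReal_mono (by simp) hsum
    rw [ENNReal.toReal_add (measure_ne_top μ _) (measure_ne_top μ _)] at h
    simp only [ENNReal.toReal_one] at h
    linarith
  -- main negative part
  have key : ∀ z < (0 : ℝ), (μ {ω | X₁ ω - X₂ ω ≤ z}).toReal < 1 / 2 := by
    intro z hz
    set ε := min δ (-z) / 2 with hεdef
    have hmin : 0 < min δ (-z) := lt_min hδ (by linarith)
    have hε0 : 0 < ε := by rw [hεdef]; linarith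
    have hεδ : ε ≤ δ := by
      have := min_le_left δ (-z); rw [hεdef]; linarith
    have h2ε : z ≤ -(2 * ε) := by
      have := min_le_right δ (-z); rw [hεdef]; linarith
    have hm0 : (0 : ℝ) ∈ Set.Icc (-δ) δ := by constructor <;> linarith
    have hmε : ε ∈ Set.Icc (-δ) δ := by constructor <;> linarith
    have hmnε : -ε ∈ Set.Icc (-δ) δ := by constructor <;> linarith
    have h1 : (μ {ω | X₁ ω ≤ -ε}).toReal < 1 / 2 :=
      lt_of_lt_of_eq (hs₁ hmnε hm0 (by linarith)) h0₁
    have h2 : 1 / 2 < (μ {ω | X₂ ω ≤ ε}).toReal :=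
      lt_of_eq_of_lt h0₂.symm (hs₂ hm0 hmε hε0)
    -- positive-probability events
    set A := X₁ ⁻¹' Set.Ioc (-ε) 0 with hAdef
    set B := X₂ ⁻¹' Set.Ioc 0 ε with hBdef
    have hAsplit : μ {ω | X₁ ω ≤ 0} = μ {ω | X₁ ω ≤ -ε} + μ A := by
      have hu : (Set.Iic (-ε) ∪ Set.Ioc (-ε) 0) = Set.Iic (0 : ℝ) :=
        Set.Iic_union_Ioc_eq_Iic (by linarith)
      have he : {ω | X₁ ω ≤ 0} = X₁ ⁻¹' Set.Iic (-ε) ∪ A := by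
        rw [hAdef, ← Set.preimage_union, hu]; rfl
      rw [he, measure_union _ (hX₁ measurableSet_Ioc)]
      · rfl
      · exact Set.disjoint_left.mpr (fun ω h1 h2 => absurd h2.1 (not_lt.mpr h1))
    have hBsplit : μ {ω | X₂ ω ≤ ε} = μ {ω | X₂ ω ≤ 0} + μ B := by
      have hu : (Set.Iic (0:ℝ) ∪ Set.Ioc 0 ε) = Set.Iic ε :=
        Set.Iic_union_Ioc_eq_Iic (by linarith)
      have he : {ω | X₂ ω ≤ ε} = X₂ ⁻¹' Set.Iic 0 ∪ B := by
        rw [hBdef, ← Set.preimage_union, hu]; rfl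
      rw [he, measure_union _ (hX₂ measurableSet_Ioc)]
      · rfl
      · exact Set.disjoint_left.mpr (fun ω h1 h2 => absurd h2.1 (not_lt.mpr h1))
    have hApos : 0 < (μ A).toReal := by
      have h := congrArg ENNReal.toReal hAsplit
      rw [ENNReal.toReal_add (measure_ne_top μ _) (measure_ne_top μ _)] at h
      linarith [h0₁, h1]
    have hBpos : 0 < (μ B).toReal := by
      have h := congrArg ENNReal.toReal hBsplit
      rw [ENNReal.toReal_add (measure_ne_top μ _) (measure_ne_top μ _)] at h
      linarith [h0₂, h2]
    have hAB : μ (A ∩ B) = μ A * μ B :=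
      hindep.measure_inter_preimage_eq_mul _ _ measurableSet_Ioc measurableSet_Ioc
    have hABpos : 0 < (μ (A ∩ B)).toReal := by
      rw [hAB, ENNReal.toReal_mul]; positivity
    -- inclusion
    have hincl : ∀ ω, ω ∈ A ∩ B → z < X₁ ω - X₂ ω ∧ X₁ ω - X₂ ω < 0 := by
      rintro ω ⟨ha, hb⟩
      simp only [hAdef, hBdef, Set.mem_preimage, Set.mem_Ioc] at ha hb
      constructor <;> [linarith [ha.1, hb.2]; linarith [ha.2, hb.1]]
    have hdisj : Disjoint {ω | X₁ ω - X₂ ω ≤ z} (A ∩ B) :=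
      Set.disjoint_left.mpr (fun ω h1 h2 => absurd (hincl ω h2).1 (not_lt.mpr h1))
    have hsub : {ω | X₁ ω - X₂ ω ≤ z} ∪ (A ∩ B) ⊆ {ω | X₁ ω - X₂ ω < 0} := by
      rintro ω (h | h)
      · exact lt_of_le_of_lt h hz
      · exact (hincl ω h).2
    have hmeasAB : MeasurableSet (A ∩ B) :=
      (hX₁ measurableSet_Ioc).inter (hX₂ measurableSet_Ioc)
    have hsum : μ {ω | X₁ ω - X₂ ω ≤ z} + μ (A ∩ B) ≤ μ {ω | X₁ ω - X₂ ω < 0} := by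
      rw [← measure_union hdisj hmeasAB]
      exact measure_mono hsub
    have h := ENNReal.toReal_mono (measure_ne_top μ _) hsum
    rw [ENNReal.toReal_add (measure_ne_top μ _) (measure_ne_top μ _)] at h
    linarith [hlt0_le, hABpos]
  refine ⟨key, ?_⟩
  intro z hz
  have hcompl : μ {ω | X₁ ω - X₂ ω ≤ z} + μ {ω | z < X₁ ω - X₂ ω} = 1 := by
    have he : {ω | z < X₁ ω - X₂ ω} = {ω | X₁ ω - X₂ ω ≤ z}ᶜ := by
      ext ω
      simp only [Set.mem_setOf_eq, Set.mem_compl_iff, not_le]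
    rw [he, measure_add_measure_compl (measurableSet_le hZm measurable_const), measure_univ]
  have hflip : μ {ω | z < X₁ ω - X₂ ω} = μ {ω | X₁ ω - X₂ ω < -z} := by
    have h1 := hmap (Set.Ioi z) measurableSet_Ioi
    have e1 : (fun ω => X₁ ω - X₂ ω) ⁻¹' Set.Ioi z = {ω | z < X₁ ω - X₂ ω} := rfl
    have e2 : (fun ω => X₂ ω - X₁ ω) ⁻¹' Set.Ioi z = {ω | X₁ ω - X₂ ω < -z} := by
      ext ω
      simp only [Set.mem_preimage, Set.mem_Ioi, Set.mem_setOf_eq]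
      constructor <;> intro h <;> linarith
    rw [e1, e2] at h1; exact h1
  have hmono : (μ {ω | X₁ ω - X₂ ω < -z}).toReal ≤ (μ {ω | X₁ ω - X₂ ω ≤ -z}).toReal :=
    ENNReal.toReal_mono (measure_ne_top μ _)
      (measure_mono (Set.setOf_subset_setOf.mpr (fun ω => le_of_lt)))
  have hneg := key (-z) (by linarith)
  have h := congrArg ENNReal.toReal hcompl
  rw [ENNReal.toReal_add (measure_ne_top μ _) (measure_ne_top μ _), hflip] at h
  simp only [ENNReal.toReal_one] at h
  linarith
end
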